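/- Given a Schottky datum with r ≥ 1 generators, every cyclically admissible word gives a hyperbolic element: for every n ≥ 1 and every σ ∈ W_n, the matrix T_σ = S_{σ(0)} S_{σ(1)} ⋯ S_{σ(n−1)} satisfies |tr T_σ| > 2. In particular the geodesic length ℓ(T_σ) := 2 arccosh(|tr T_σ|/2) is well defined and strictly positive. -/

import Mathlib

/-- A Schottky datum with `r ≥ 1` generators: pairwise disjoint closed disks
`D̄ j = {z : dist z (center j) ≤ radius j}` (for `j ∈ ℤ/2rℤ`) centered on the real axis,
together with matrices `gen j ∈ SL(2,ℝ)` satisfying `gen (j + r) = (gen j)⁻¹`, such that for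
each `j` the Möbius transformation of `gen j` is defined on all of `ℂ ∖ D j` (the complement
of the open disk) and maps it into the open disk `D (j + r)`. -/
structure SchottkyDatum (r : ℕ) where
  center : ZMod (2 * r) → ℝ
  radius : ZMod (2 * r) → ℝ
  radius_pos : ∀ j, 0 < radius j
  disks_disjoint : ∀ i j, i ≠ j → ∀ z : ℂ,
    dist z (center i : ℂ) ≤ radius i → ¬ dist z (center j : ℂ) ≤ radius j
  gen : ZMod (2 * r) → Matrix.SpecialLinearGroup (Fin 2) ℝ
  gen_add_r : ∀ j, gen (j + (r : ZMod (2 * r))) = (gen j)⁻¹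
  denom_ne_zero : ∀ j, ∀ z : ℂ, ¬ dist z (center j : ℂ) < radius j →
    (((gen j : Matrix (Fin 2) (Fin 2) ℝ) 1 0 : ℂ) * z +
        ((gen j : Matrix (Fin 2) (Fin 2) ℝ) 1 1 : ℂ)) ≠ 0
  maps_into : ∀ j, ∀ z : ℂ, ¬ dist z (center j : ℂ) < radius j →
    dist
        ((((gen j : Matrix (Fin 2) (Fin 2) ℝ) 0 0 : ℂ) * z +
            ((gen j : Matrix (Fin 2) (Fin 2) ℝ) 0 1 : ℂ)) /
          (((gen j : Matrix (Fin 2) (Fin 2) ℝ) 1 0 : ℂ) * z +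
            ((gen j : Matrix (Fin 2) (Fin 2) ℝ) 1 1 : ℂ)))
        ((center (j + (r : ZMod (2 * r))) : ℂ)) <
      radius (j + (r : ZMod (2 * r)))

/-- The element `T_σ = S_{σ(0)} S_{σ(1)} ⋯ S_{σ(n-1)}` associated to a word
`σ : ℤ/nℤ → ℤ/2rℤ`. -/
def Tword {r : ℕ} (D : SchottkyDatum r) {n : ℕ} (σ : ZMod n → ZMod (2 * r)) :
    Matrix.SpecialLinearGroup (Fin 2) ℝ :=
  ((List.finRange n).map fun i => D.gen (σ ((i : ℕ) : ZMod n))).prod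

/-- The inverse of `cosh` on `[1, ∞)`: `arcosh x = log (x + √(x² - 1))`. -/
noncomputable def arcosh (x : ℝ) : ℝ := Real.log (x + Real.sqrt (x ^ 2 - 1))

/-!
Ping-pong: following an admissible word cyclically, each generator carries the image of the
previous one into a disk disjoint from the next one's, and admissibility at the wrap-around
`σ(n-1) → σ(0)` says that `D̄_{σ(0)+r}` avoids `D_{σ(n-1)}`. Hence `T_σ` maps the closed disk
`D̄_{σ(0)+r}` into its interior. On the real diameter `[l, u]` of that disk, `T_σ` is a real
Möbius map without pole which sends `[l, u]` into `(l, u)`, so `x ↦ T_σ x - x` changes sign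
there while the denominator does not. Thus the fixed-point quadratic of `T_σ` changes sign, and
its discriminant `(tr T_σ)² - 4` is positive.
-/

open Set Metric

theorem discrim_pos_of_mul_neg {K : Type*} [Field K] [LinearOrder K] [IsStrictOrderedRing K]
    {a b c x y : K} (h : (a * (x * x) + b * x + c) * (a * (y * y) + b * y + c) < 0) :
    0 < discrim a b c := by
  by_contra! hΔ
  have completed (t : K) :
      4 * a * (a * (t * t) + b * t + c) = (2 * a * t + b) ^ 2 - discrim a b c := by
    rw [discrim]; ring
  have ha : a = 0 := by
    by_contra ha
    nlinarith [completed x, completed y, mul_self_pos.2 ha,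
      mul_nonneg (sq_nonneg (2 * a * x + b)) (sq_nonneg (2 * a * y + b))]
  have hb : b = 0 := by
    rw [discrim, ha] at hΔ
    nlinarith [sq_nonneg b]
  subst ha hb
  nlinarith [mul_self_nonneg c]

theorem mul_pos_of_continuousOn_of_ne_zero {f : ℝ → ℝ} {l u : ℝ} (hlu : l ≤ u)
    (hf : ContinuousOn f (Icc l u)) (hf0 : ∀ x ∈ Icc l u, f x ≠ 0) : 0 < f l * f u := by
  by_contra! h
  obtain ⟨x, hx, hfx⟩ : (0 : ℝ) ∈ f '' Icc l u := by
    rw [← uIcc_of_le hlu]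
    refine intermediate_value_uIcc (uIcc_of_le hlu ▸ hf) ?_
    rcases (hf0 l ⟨le_rfl, hlu⟩).lt_or_gt with hl | hl
    · exact mem_uIcc.2 (.inl ⟨hl.le, nonneg_of_mul_nonpos_right h hl⟩)
    · exact mem_uIcc.2 (.inr ⟨nonpos_of_mul_nonpos_right h hl, hl.le⟩)
  exact hf0 x hx hfx

theorem two_lt_abs_add_of_lt_mobius_of_mobius_lt {a b c d l u : ℝ} (hdet : a * d - b * c = 1)
    (hlu : l ≤ u) (hpole : ∀ x ∈ Icc l u, c * x + d ≠ 0) (hl : l < (a * l + b) / (c * l + d))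
    (hu : (a * u + b) / (c * u + d) < u) : 2 < |a + d| := by
  have hsign : 0 < (c * l + d) * (c * u + d) :=
    mul_pos_of_continuousOn_of_ne_zero (f := fun x ↦ c * x + d) hlu (by fun_prop) hpole
  -- `-c x² + (a - d) x + b` is the fixed-point quadratic, of discriminant `(a + d)² - 4`
  have hdisp (x : ℝ) (hx : c * x + d ≠ 0) : (-c * (x * x) + (a - d) * x + b) * (c * x + d) =
      ((a * x + b) / (c * x + d) - x) * (c * x + d) ^ 2 := by
    field_simp; ring
  have hPl : 0 < (-c * (l * l) + (a - d) * l + b) * (c * l + d) := by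
    rw [hdisp l (hpole l ⟨le_rfl, hlu⟩)]
    exact mul_pos (sub_pos.2 hl) (pow_two_pos_of_ne_zero (hpole l ⟨le_rfl, hlu⟩))
  have hPu : (-c * (u * u) + (a - d) * u + b) * (c * u + d) < 0 := by
    rw [hdisp u (hpole u ⟨hlu, le_rfl⟩)]
    exact mul_neg_of_neg_of_pos (sub_neg.2 hu) (pow_two_pos_of_ne_zero (hpole u ⟨hlu, le_rfl⟩))
  have hchange : (-c * (l * l) + (a - d) * l + b) * (-c * (u * u) + (a - d) * u + b) < 0 := by
    nlinarith [mul_neg_of_pos_of_neg hPl hPu]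
  have hΔ : discrim (-c) (a - d) b = (a + d) ^ 2 - 2 ^ 2 := by
    rw [discrim]; linear_combination -4 * hdet
  have := discrim_pos_of_mul_neg hchange
  rwa [hΔ, sub_pos, sq_lt_sq, abs_two] at this

def mobiusDenom (M : Matrix (Fin 2) (Fin 2) ℝ) (z : ℂ) : ℂ := M 1 0 * z + M 1 1

noncomputable def mobius (M : Matrix (Fin 2) (Fin 2) ℝ) (z : ℂ) : ℂ :=
  (M 0 0 * z + M 0 1) / mobiusDenom M z

def MobiusMapsTo (M : Matrix (Fin 2) (Fin 2) ℝ) (s t : Set ℂ) : Prop :=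
  ∀ z ∈ s, mobiusDenom M z ≠ 0 ∧ mobius M z ∈ t

theorem mobiusDenom_mul (A B : Matrix (Fin 2) (Fin 2) ℝ) {z : ℂ} (h : mobiusDenom B z ≠ 0) :
    mobiusDenom (A * B) z = mobiusDenom A (mobius B z) * mobiusDenom B z := by
  simp only [mobiusDenom, mobius, Matrix.mul_apply, Fin.sum_univ_two] at h ⊢
  push_cast
  field_simp
  ring

theorem mobius_mul (A B : Matrix (Fin 2) (Fin 2) ℝ) {z : ℂ} (h : mobiusDenom B z ≠ 0) :
    mobius (A * B) z = mobius A (mobius B z) := by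
  rw [mobius, mobiusDenom_mul A B h, mobius]
  simp only [mobiusDenom, mobius, Matrix.mul_apply, Fin.sum_univ_two] at h ⊢
  push_cast
  field_simp
  ring

theorem mobiusDenom_ofReal (M : Matrix (Fin 2) (Fin 2) ℝ) (x : ℝ) :
    mobiusDenom M x = ↑(M 1 0 * x + M 1 1) := by
  push_cast; rfl

theorem mobius_ofReal (M : Matrix (Fin 2) (Fin 2) ℝ) (x : ℝ) :
    mobius M x = ↑((M 0 0 * x + M 0 1) / (M 1 0 * x + M 1 1)) := by
  push_cast; rfl

namespace MobiusMapsTo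

variable {A B : Matrix (Fin 2) (Fin 2) ℝ} {s t u : Set ℂ}

theorem mul (hA : MobiusMapsTo A t u) (hB : MobiusMapsTo B s t) : MobiusMapsTo (A * B) s u :=
  fun z hz ↦
    have ⟨hBz, hBt⟩ := hB z hz
    have ⟨hAz, hAu⟩ := hA _ hBt
    ⟨mobiusDenom_mul A B hBz ▸ mul_ne_zero hAz hBz, mobius_mul A B hBz ▸ hAu⟩

theorem mono (h : MobiusMapsTo A s t) {s' t' : Set ℂ} (hs : s' ⊆ s) (ht : t ⊆ t') :
    MobiusMapsTo A s' t' :=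
  fun z hz ↦ (h z (hs hz)).imp_right (@ht _)

end MobiusMapsTo

theorem two_lt_abs_trace_of_mobiusMapsTo_closedBall {M : Matrix (Fin 2) (Fin 2) ℝ}
    (hdet : M.det = 1) {c ρ : ℝ} (hρ : 0 ≤ ρ)
    (h : MobiusMapsTo M (closedBall (c : ℂ) ρ) (ball (c : ℂ) ρ)) : 2 < |M.trace| := by
  have hreal : ∀ x ∈ Icc (c - ρ) (c + ρ), M 1 0 * x + M 1 1 ≠ 0 ∧
      (M 0 0 * x + M 0 1) / (M 1 0 * x + M 1 1) ∈ Ioo (c - ρ) (c + ρ) := by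
    intro x hx
    rw [← Real.closedBall_eq_Icc, ← Complex.isometry_ofReal.preimage_closedBall] at hx
    obtain ⟨hden, hmem⟩ := h _ hx
    rw [mobiusDenom_ofReal, Complex.ofReal_ne_zero] at hden
    rw [mobius_ofReal, ← mem_preimage, Complex.isometry_ofReal.preimage_ball,
      Real.ball_eq_Ioo] at hmem
    exact ⟨hden, hmem⟩
  rw [Matrix.det_fin_two] at hdet
  rw [Matrix.trace_fin_two]
  exact two_lt_abs_add_of_lt_mobius_of_mobius_lt hdet (by linarith) (fun x hx ↦ (hreal x hx).1)
    (hreal _ ⟨le_rfl, by linarith⟩).2.1 (hreal _ ⟨by linarith, le_rfl⟩).2.2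

theorem ZMod.natCast_add_self_two_mul (r : ℕ) : (r : ZMod (2 * r)) + r = 0 := by
  rw [← two_mul]; exact_mod_cast ZMod.natCast_self (2 * r)

theorem arcosh_pos {x : ℝ} (hx : 1 < x) : 0 < arcosh x :=
  Real.log_pos (lt_add_of_lt_of_nonneg hx (Real.sqrt_nonneg _))

namespace SchottkyDatum

variable {r : ℕ} (D : SchottkyDatum r)

def disk (j : ZMod (2 * r)) : Set ℂ := ball (D.center j : ℂ) (D.radius j)

def closedDisk (j : ZMod (2 * r)) : Set ℂ := closedBall (D.center j : ℂ) (D.radius j)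

theorem closedDisk_subset_compl_disk {i j : ZMod (2 * r)} (h : i ≠ j) :
    D.closedDisk i ⊆ (D.disk j)ᶜ :=
  fun z hi hj ↦ D.disks_disjoint i j h z hi (le_of_lt hj)

theorem mobiusMapsTo_gen (j : ZMod (2 * r)) :
    MobiusMapsTo (D.gen j) (D.disk j)ᶜ (D.disk (j + r)) :=
  fun z hz ↦ ⟨D.denom_ne_zero j z hz, D.maps_into j z hz⟩

theorem mobiusMapsTo_prod_of_isChain {L : List (ZMod (2 * r))} (hne : L ≠ [])
    (hL : L.IsChain fun i j : ZMod (2 * r) ↦ j ≠ i + r) :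
    MobiusMapsTo (L.map D.gen).prod (D.disk (L.getLast hne))ᶜ (D.disk (L.head hne + r)) := by
  induction L with
  | nil => exact absurd rfl hne
  | cons j L ih =>
    cases L with
    | nil => simpa using D.mobiusMapsTo_gen j
    | cons k L =>
      rw [List.isChain_cons_cons] at hL
      have hkj : k + r ≠ j := fun h ↦ hL.1 <| by
        rw [← h, add_assoc, ZMod.natCast_add_self_two_mul, add_zero]
      rw [List.map_cons, List.prod_cons, Matrix.SpecialLinearGroup.coe_mul,
        List.getLast_cons_cons]
      exact (D.mobiusMapsTo_gen j).mul <| (ih (List.cons_ne_nil k L) hL.2).mono subset_rfl <|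
        ball_subset_closedBall.trans (D.closedDisk_subset_compl_disk hkj)

theorem mobiusMapsTo_Tword {k : ℕ} {σ : ZMod (k + 1) → ZMod (2 * r)}
    (hσ : ∀ i : ZMod (k + 1), σ (i + 1) ≠ σ i + (r : ZMod (2 * r))) :
    MobiusMapsTo (Tword D σ) (D.closedDisk (σ 0 + r)) (D.disk (σ 0 + r)) := by
  set g : Fin (k + 1) → ZMod (2 * r) := fun i ↦ σ (i : ℕ)
  -- `Tword` coerces `List.finRange` to a list of naturals through the list monad
  have hT : Tword D σ = ((List.ofFn g).map D.gen).prod := by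
    simp only [Tword, bind_pure_comp, List.map_eq_map, List.map_map, List.ofFn_eq_map]; rfl
  have hchain : (List.ofFn g).IsChain fun i j : ZMod (2 * r) ↦ j ≠ i + r :=
    List.isChain_ofFn.2 fun i _ ↦ by simpa [g] using hσ i
  have hwrap : σ 0 + r ≠ σ k := fun h ↦ hσ k <| by
    rw [← h, add_assoc, ZMod.natCast_add_self_two_mul, add_zero, ← Nat.cast_succ,
      ZMod.natCast_self]
  have := D.mobiusMapsTo_prod_of_isChain (by simp) hchain
  simp only [List.head_ofFn, List.getLast_ofFn, g] at this
  rw [hT]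
  exact this.mono (D.closedDisk_subset_compl_disk hwrap) subset_rfl

end SchottkyDatum

theorem stmt9_general (r : ℕ) (D : SchottkyDatum r) (n : ℕ) (hn : 1 ≤ n)
    (σ : ZMod n → ZMod (2 * r))
    (hσ : ∀ i : ZMod n, σ (i + 1) ≠ σ i + (r : ZMod (2 * r))) :
    2 < |Matrix.trace ((Tword D σ : Matrix (Fin 2) (Fin 2) ℝ))| ∧
    0 < 2 * arcosh (|Matrix.trace ((Tword D σ : Matrix (Fin 2) (Fin 2) ℝ))| / 2) := by
  obtain ⟨k, rfl⟩ := Nat.exists_eq_add_of_le' hn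
  have htrace := two_lt_abs_trace_of_mobiusMapsTo_closedBall (Tword D σ).2
    (D.radius_pos _).le (D.mobiusMapsTo_Tword hσ)
  exact ⟨htrace, mul_pos two_pos (arcosh_pos (by linarith))⟩

/-- Given a Schottky datum with `r ≥ 1` generators, every cyclically admissible word of
length `n ≥ 1` gives a hyperbolic element: `|tr T_σ| > 2`, so the geodesic length
`ℓ(T_σ) = 2 arccosh (|tr T_σ| / 2)` is well defined and strictly positive. -/
theorem stmt9 (r : ℕ) (hr : 1 ≤ r) (D : SchottkyDatum r) (n : ℕ) (hn : 1 ≤ n)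
    (σ : ZMod n → ZMod (2 * r))
    (hσ : ∀ i : ZMod n, σ (i + 1) ≠ σ i + (r : ZMod (2 * r))) :
    2 < |Matrix.trace ((Tword D σ : Matrix (Fin 2) (Fin 2) ℝ))| ∧
    0 < 2 * arcosh (|Matrix.trace ((Tword D σ : Matrix (Fin 2) (Fin 2) ℝ))| / 2) :=
  stmt9_general r D n hn σ hσ
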